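/- Let F̄, G̃, H : ℝ → ℝ be smooth functions. Define u₁(x,y) = 2e^y G̃(x) + e^x(3F̄(y) + F̄′(y)) + e^{(x+y)/2} H(x−y), ū₂(x,y) = e^y G̃′(x) + 2e^x F̄′(y), and ū₃(x,y) = e^x(F̄″(y) − F̄′(y)). Then (u₁, ū₂, ū₃) satisfies the transformed characteristic system ∂x ū₃ = ū₃, ∂y ū₂ = 2ū₃ + ū₂, (∂x + ∂y)u₁ = ū₃ + 2ū₂ + u₁ on all of ℝ². -/

import Mathlib

/-- Partial derivative with respect to the first variable. -/
noncomputable def pdx (f : ℝ → ℝ → ℝ) : ℝ → ℝ → ℝ := fun x y => deriv (fun s => f s y) x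

/-- Partial derivative with respect to the second variable. -/
noncomputable def pdy (f : ℝ → ℝ → ℝ) : ℝ → ℝ → ℝ := fun x y => deriv (fun t => f x t) y

/-- u₁ = 2e^y G̃(x) + e^x(3F̄(y) + F̄′(y)) + e^{(x+y)/2} H(x−y). -/
noncomputable def sol₁ (F G H : ℝ → ℝ) : ℝ → ℝ → ℝ :=
  fun x y => 2 * Real.exp y * G x + Real.exp x * (3 * F y + deriv F y)
    + Real.exp ((x + y) / 2) * H (x - y)

/-- ū₂ = e^y G̃′(x) + 2e^x F̄′(y). -/
noncomputable def sol₂ (F G : ℝ → ℝ) : ℝ → ℝ → ℝ :=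
  fun x y => Real.exp y * deriv G x + 2 * Real.exp x * deriv F y

/-- ū₃ = e^x(F̄″(y) − F̄′(y)). -/
noncomputable def sol₃ (F : ℝ → ℝ) : ℝ → ℝ → ℝ :=
  fun x y => Real.exp x * (deriv (deriv F) y - deriv F y)

/-- For arbitrary smooth F̄, G̃, H the explicit formulas give a solution of the
    transformed system ∂x ū₃ = ū₃, ∂y ū₂ = 2ū₃+ū₂, (∂x+∂y)u₁ = ū₃+2ū₂+u₁. -/
theorem explicit_solution_of_transformed_system
    (F G H : ℝ → ℝ)
    (hF : ContDiff ℝ (⊤ : ℕ∞) F) (hG : ContDiff ℝ (⊤ : ℕ∞) G) (hH : ContDiff ℝ (⊤ : ℕ∞) H) :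
    (∀ x y : ℝ, pdx (sol₃ F) x y = sol₃ F x y) ∧
    (∀ x y : ℝ, pdy (sol₂ F G) x y = 2 * sol₃ F x y + sol₂ F G x y) ∧
    (∀ x y : ℝ, pdx (sol₁ F G H) x y + pdy (sol₁ F G H) x y
        = sol₃ F x y + 2 * sol₂ F G x y + sol₁ F G H x y) := by
  have hF' := (contDiff_infty_iff_deriv.mp (hF.of_le (by simp))).2
  have hF'' := (contDiff_infty_iff_deriv.mp hF').2
  have hFd := hF.differentiable (by simp)
  have hF'd := hF'.differentiable (by simp)
  have hF''d := hF''.differentiable (by simp)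
  have hGd := hG.differentiable (by simp)
  have hG' := (contDiff_infty_iff_deriv.mp (hG.of_le (by simp))).2
  have hG'd := hG'.differentiable (by simp)
  have hHd := hH.differentiable (by simp)
  refine ⟨fun x y => ?_, fun x y => ?_, fun x y => ?_⟩
  · have h : HasDerivAt (fun s => sol₃ F s y)
        (Real.exp x * (deriv (deriv F) y - deriv F y)) x := by
      exact (Real.hasDerivAt_exp x).mul_const (deriv (deriv F) y - deriv F y)
    simp [pdx, h.deriv, sol₃]
  · have h : HasDerivAt (fun t => sol₂ F G x t)
        (Real.exp y * deriv G x + 2 * Real.exp x * deriv (deriv F) y) y := by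
      have h1 := (Real.hasDerivAt_exp y).mul_const (deriv G x)
      have h2 := ((hF'd y).hasDerivAt).const_mul (2 * Real.exp x)
      exact h1.add h2
    simp only [pdy]
    rw [h.deriv]
    simp only [sol₂, sol₃]
    ring
  · have hx : HasDerivAt (fun s => sol₁ F G H s y)
        (2 * Real.exp y * deriv G x + Real.exp x * (3 * F y + deriv F y)
          + (Real.exp ((x + y) / 2) * (1 / 2) * H (x - y)
            + Real.exp ((x + y) / 2) * (deriv H (x - y) * 1))) x := by
      have h1 : HasDerivAt (fun s => 2 * Real.exp y * G s) (2 * Real.exp y * deriv G x) x :=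
        ((hGd x).hasDerivAt).const_mul _
      have h2 : HasDerivAt (fun s => Real.exp s * (3 * F y + deriv F y))
          (Real.exp x * (3 * F y + deriv F y)) x :=
        (Real.hasDerivAt_exp x).mul_const _
      have hin : HasDerivAt (fun s : ℝ => (s + y) / 2) (1 / 2) x := by
        simpa using ((hasDerivAt_id x).add_const y).div_const 2
      have h3 : HasDerivAt (fun s : ℝ => Real.exp ((s + y) / 2))
          (Real.exp ((x + y) / 2) * (1 / 2)) x :=
        hin.exp
      have hin2 : HasDerivAt (fun s : ℝ => s - y) 1 x := (hasDerivAt_id x).sub_const y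
      have h4 : HasDerivAt (fun s : ℝ => H (s - y)) (deriv H (x - y) * 1) x :=
        ((hHd (x - y)).hasDerivAt).comp x hin2
      exact (h1.add h2).add (h3.mul h4)
    have hy : HasDerivAt (fun t => sol₁ F G H x t)
        (2 * Real.exp y * G x + Real.exp x * (3 * deriv F y + deriv (deriv F) y)
          + (Real.exp ((x + y) / 2) * (1 / 2) * H (x - y)
            + Real.exp ((x + y) / 2) * (deriv H (x - y) * (-1)))) y := by
      have h1 : HasDerivAt (fun t : ℝ => 2 * Real.exp t * G x)
          (2 * Real.exp y * G x) y := by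
        simpa [mul_comm, mul_assoc, mul_left_comm] using
          (((Real.hasDerivAt_exp y).const_mul 2).mul_const (G x))
      have h2 : HasDerivAt (fun t => Real.exp x * (3 * F t + deriv F t))
          (Real.exp x * (3 * deriv F y + deriv (deriv F) y)) y := by
        exact (((hFd y).hasDerivAt.const_mul 3).add (hF'd y).hasDerivAt).const_mul _
      have hin : HasDerivAt (fun t : ℝ => (x + t) / 2) (1 / 2) y := by
        simpa using ((hasDerivAt_id y).const_add x).div_const 2
      have h3 : HasDerivAt (fun t : ℝ => Real.exp ((x + t) / 2))
          (Real.exp ((x + y) / 2) * (1 / 2)) y :=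
        hin.exp
      have hin2 : HasDerivAt (fun t : ℝ => x - t) (-1) y := by
        simpa using (hasDerivAt_id y).const_sub x
      have h4 : HasDerivAt (fun t : ℝ => H (x - t)) (deriv H (x - y) * (-1)) y :=
        ((hHd (x - y)).hasDerivAt).comp y hin2
      exact (h1.add h2).add (h3.mul h4)
    simp only [pdx, pdy]
    rw [hx.deriv, hy.deriv]
    simp only [sol₁, sol₂, sol₃]
    ring
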